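/- arXiv:1710.00529 — 3 statements merged into one kernel-verified Lean document; each statement's English description precedes it below -/
import Mathlib

section
/- Let Π_h : Y → Y_h be a bounded linear projection onto a subspace Y_h of the Hilbert space Y with Π_h|_{Y_h} = id, and let b' : X_h × Y → ℝ be a bounded bilinear form with b'(ξ_h, y − Π_h y) = 0 for all ξ_h ∈ X_h and y ∈ Y. If β := inf_{ξ_h ∈ X_h, ‖ξ_h‖=1} sup_{η ∈ Y, ‖η‖=1} b'(ξ_h, η) > 0, then the discrete inf-sup constant over Y_h satisfies β / ‖Π_h‖ ≤ inf_{ξ_h ∈ X_h, ‖ξ_h‖=1} sup_{η_h ∈ Y_h, ‖η_h‖=1} b'(ξ_h, η_h). -/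
/-! On the unit sphere the supremum of a real functional is its operator norm, so both inf-sup
constants are infima of operator norms: of `b' ξ` and of its restriction to `Y_h`. The Fortin
property says `b' ξ = b' ξ ∘ Π_h`, and `Π_h` maps into `Y_h`, whence
`‖b' ξ‖ ≤ ‖b' ξ|_{Y_h}‖ * ‖Π_h‖`. -/

open Metric

namespace ContinuousLinearMap

theorem iSup_sphere_eq_norm {E : Type*} [NormedAddCommGroup E] [NormedSpace ℝ E]
    (f : E →L[ℝ] ℝ) : ⨆ x : sphere (0 : E) 1, f x = ‖f‖ := by
  rcases subsingleton_or_nontrivial E with _ | _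
  · rw [sphere_eq_empty_of_subsingleton one_ne_zero, Real.iSup_of_isEmpty, Subsingleton.elim f 0,
      opNorm_zero]
  have hne : (sphere (0 : E) 1).Nonempty := NormedSpace.sphere_nonempty.mpr zero_le_one
  have := hne.to_subtype
  refine ciSup_eq_of_forall_le_of_forall_lt_exists_gt (fun x => ?_) fun w hw => ?_
  · calc f x ≤ ‖f x‖ := Real.le_norm_self _
      _ ≤ ‖f‖ := f.unit_le_opNorm x (mem_sphere_zero_iff_norm.1 x.2).le
  obtain ⟨x, hx, hwx⟩ : ∃ x ∈ sphere (0 : E) 1, w < |f x| := by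
    rcases lt_or_ge w 0 with hw0 | hw0
    · obtain ⟨x, hx⟩ := hne
      exact ⟨x, hx, hw0.trans_le (abs_nonneg _)⟩
    · lift w to NNReal using hw0
      obtain ⟨x, hx, hfx⟩ := f.exists_nnnorm_eq_one_lt_apply_of_lt_opNNNorm hw
      exact ⟨x, by simpa using congrArg NNReal.toReal hx, hfx⟩
  rcases le_total 0 (f x) with hfx | hfx
  · exact ⟨⟨x, hx⟩, by rwa [abs_of_nonneg hfx] at hwx⟩
  · exact ⟨⟨-x, by simpa using hx⟩, by rwa [abs_of_nonpos hfx, ← map_neg] at hwx⟩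

theorem opNorm_le_opNorm_comp_subtypeL_mul {𝕜 E F : Type*} [NontriviallyNormedField 𝕜]
    [SeminormedAddCommGroup E] [NormedSpace 𝕜 E] [SeminormedAddCommGroup F] [NormedSpace 𝕜 F]
    {K : Submodule 𝕜 E} (f : E →L[𝕜] F) (P : E →L[𝕜] E) (hP : ∀ x, P x ∈ K)
    (hfP : ∀ x, f (P x) = f x) : ‖f‖ ≤ ‖f ∘L K.subtypeL‖ * ‖P‖ := by
  refine f.opNorm_le_bound (by positivity) fun x => ?_
  calc ‖f x‖ = ‖(f ∘L K.subtypeL) ⟨P x, hP x⟩‖ := by rw [← hfP]; rfl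
    _ ≤ ‖f ∘L K.subtypeL‖ * ‖P x‖ := (f ∘L K.subtypeL).le_opNorm _
    _ ≤ ‖f ∘L K.subtypeL‖ * (‖P‖ * ‖x‖) := by gcongr; exact P.le_opNorm x
    _ = _ := (mul_assoc _ _ _).symm

end ContinuousLinearMap

theorem fortin_discrete_inf_sup_general
    (Xh Y : Type*) [NormedAddCommGroup Xh] [NormedSpace ℝ Xh]
    [NormedAddCommGroup Y] [InnerProductSpace ℝ Y]
    (Yh : Submodule ℝ Y)
    (Ph : Y →L[ℝ] Y)
    (hrange : ∀ y : Y, Ph y ∈ Yh)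
    (b' : Xh →L[ℝ] Y →L[ℝ] ℝ)
    (hfortin : ∀ (ξh : Xh) (y : Y), b' ξh (y - Ph y) = 0)
    (β : ℝ)
    (hβ : β = ⨅ ξh : Metric.sphere (0 : Xh) 1, ⨆ η : Metric.sphere (0 : Y) 1,
      b' (ξh : Xh) (η : Y))
    (hβpos : 0 < β) :
    β / ‖Ph‖ ≤ ⨅ ξh : Metric.sphere (0 : Xh) 1, ⨆ ηh : Metric.sphere (0 : Yh) 1,
      b' (ξh : Xh) ((ηh : Yh) : Y) := by
  have hsupYh (ξ : Xh) : ⨆ ηh : sphere (0 : Yh) 1, b' ξ ηh = ‖b' ξ ∘L Yh.subtypeL‖ :=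
    ContinuousLinearMap.iSup_sphere_eq_norm (b' ξ ∘L Yh.subtypeL)
  simp_rw [ContinuousLinearMap.iSup_sphere_eq_norm, hsupYh] at hβ ⊢
  -- otherwise `β` would be the junk value `0` of an infimum over the empty sphere
  have : Nonempty (sphere (0 : Xh) 1) := by
    by_contra h
    rw [not_nonempty_iff] at h
    rw [hβ, Real.iInf_of_isEmpty] at hβpos
    exact hβpos.false
  refine le_ciInf fun ξ =>
    div_le_of_le_mul₀ (norm_nonneg _) (ContinuousLinearMap.opNorm_nonneg _) ?_
  calc β ≤ ‖b' ξ‖ := hβ ▸ ciInf_le ⟨0, by rintro _ ⟨ξ, rfl⟩; positivity⟩ ξ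
    _ ≤ ‖b' ξ ∘L Yh.subtypeL‖ * ‖Ph‖ :=
      (b' ξ).opNorm_le_opNorm_comp_subtypeL_mul Ph hrange fun y =>
        (sub_eq_zero.mp (by rw [← map_sub]; exact hfortin ξ y)).symm

/-- Fortin projection implies a discrete inf-sup condition. -/
theorem fortin_discrete_inf_sup
    (Xh Y : Type*) [NormedAddCommGroup Xh] [NormedSpace ℝ Xh]
    [NormedAddCommGroup Y] [InnerProductSpace ℝ Y] [CompleteSpace Y]
    (Yh : Submodule ℝ Y) (hYh : IsClosed (Yh : Set Y))
    (Ph : Y →L[ℝ] Y)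
    (hrange : ∀ y : Y, Ph y ∈ Yh)
    (hproj : ∀ y ∈ Yh, Ph y = y)
    (b' : Xh →L[ℝ] Y →L[ℝ] ℝ)
    (hfortin : ∀ (ξh : Xh) (y : Y), b' ξh (y - Ph y) = 0)
    (β : ℝ)
    (hβ : β = ⨅ ξh : Metric.sphere (0 : Xh) 1, ⨆ η : Metric.sphere (0 : Y) 1,
      b' (ξh : Xh) (η : Y))
    (hβpos : 0 < β) :
    β / ‖Ph‖ ≤ ⨅ ξh : Metric.sphere (0 : Xh) 1, ⨆ ηh : Metric.sphere (0 : Yh) 1,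
      b' (ξh : Xh) ((ηh : Yh) : Y) :=
  fortin_discrete_inf_sup_general Xh Y Yh Ph hrange b' hfortin β hβ hβpos
end

section
/- Let b : X_h × Y_h → ℝ be Fréchet differentiable in the first variable with values linear in the second, on finite-dimensional spaces X_h and a finite-dimensional Hilbert space Y_h, and let Φ(ξ) := ½‖F − b(ξ;·)‖²_{Y_h*}. If x_h is a stationary point of Φ and y_h ∈ Y_h is the Riesz representation of F − b(x_h;·), then (x_h, y_h) satisfies the mixed system: ⟨y_h, η⟩ + b(x_h; η) = F(η) for all η ∈ Y_h and b'(x_h; ξ, y_h) = 0 for all ξ ∈ X_h. Conversely, any solution (x_h, y_h) of the mixed system yields a stationary point x_h of Φ. -/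
/-!
By the Riesz isometry, the derivative of `t ↦ ½‖F - B(x + tξ)‖²` at `0` is `-b'(x; ξ, ρ(x))`, with
`ρ(x)` the Riesz representative of the residual `F - B x`. With `y_h = ρ(x_h)` the first equation of
the mixed system holds by construction, and stationarity is exactly the second one.
-/

open scoped RealInnerProductSpace

open InnerProductSpace

section DualNormSq

variable {Y : Type*} [NormedAddCommGroup Y] [InnerProductSpace ℝ Y] [CompleteSpace Y]

/-- The dual is differentiated through the Riesz isometry, where `‖·‖²` has a known derivative. -/
theorem HasDerivAt.half_norm_sq_strongDual {g : ℝ → StrongDual ℝ Y} {g' : StrongDual ℝ Y}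
    {t : ℝ} (hg : HasDerivAt g g' t) :
    HasDerivAt (fun s => ‖g s‖ ^ 2 / 2) (g' ((toDual ℝ Y).symm (g t))) t := by
  have hRiesz : HasDerivAt (fun s => (toDual ℝ Y).symm (g s)) ((toDual ℝ Y).symm g') t :=
    (toDual ℝ Y).symm.toContinuousLinearEquiv.hasFDerivAt.comp_hasDerivAt t hg
  have hpair : ⟪(toDual ℝ Y).symm (g t), (toDual ℝ Y).symm g'⟫ = g' ((toDual ℝ Y).symm (g t)) := by
    rw [real_inner_comm, toDual_symm_apply]
  have h := hRiesz.norm_sq.div_const 2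
  simp only [LinearIsometryEquiv.norm_map, hpair] at h
  rwa [mul_div_cancel_left₀ _ two_ne_zero] at h

variable {X : Type*} [NormedAddCommGroup X] [NormedSpace ℝ X]

theorem HasFDerivAt.hasLineDerivAt_half_norm_sq_sub {B : X → StrongDual ℝ Y}
    {L : X →L[ℝ] StrongDual ℝ Y} {x : X} (hB : HasFDerivAt B L x) (F : StrongDual ℝ Y) (v : X) :
    HasLineDerivAt ℝ (fun ξ => ‖F - B ξ‖ ^ 2 / 2) (-L v ((toDual ℝ Y).symm (F - B x))) x v := by
  have hres : HasDerivAt (fun t : ℝ => F - B (x + t • v)) (-L v) 0 :=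
    (hB.hasLineDerivAt v).const_sub F
  simpa only [HasLineDerivAt, zero_smul, add_zero, neg_apply] using hres.half_norm_sq_strongDual

end DualNormSq

theorem dpg_stationary_iff_mixed_general
    (X Y : Type*) [NormedAddCommGroup X] [NormedSpace ℝ X]
    [NormedAddCommGroup Y] [InnerProductSpace ℝ Y] [FiniteDimensional ℝ Y]
    (B : X → (Y →L[ℝ] ℝ)) (DB : X → X →L[ℝ] (Y →L[ℝ] ℝ))
    (hB : ∀ ξ, HasFDerivAt B (DB ξ) ξ)
    (F : Y →L[ℝ] ℝ)
    (Φ : X → ℝ) (hΦ : ∀ ξ, Φ ξ = ‖F - B ξ‖ ^ 2 / 2)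
    (xh : X) (yh : Y)
    (hyh : ∀ η : Y, ⟪yh, η⟫ = F η - B xh η) :
    (∀ ξ : X, HasDerivAt (fun t : ℝ => Φ (xh + t • ξ)) 0 0) ↔
      ((∀ η : Y, ⟪yh, η⟫ + B xh η = F η) ∧ ∀ ξ : X, DB xh ξ yh = 0) := by
  have hRiesz : (toDual ℝ Y).symm (F - B xh) = yh :=
    ext_inner_right ℝ fun η => by rw [toDual_symm_apply, hyh]; rfl
  have hderiv : ∀ ξ : X, HasDerivAt (fun t : ℝ => Φ (xh + t • ξ)) (-DB xh ξ yh) 0 := by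
    intro ξ
    have h := (hB xh).hasLineDerivAt_half_norm_sq_sub F ξ
    rwa [← funext hΦ, hRiesz] at h
  have hstate : ∀ η : Y, ⟪yh, η⟫ + B xh η = F η := fun η => by rw [hyh]; ring
  constructor
  · intro hstat
    exact ⟨hstate, fun ξ => neg_eq_zero.mp ((hderiv ξ).unique (hstat ξ))⟩
  · rintro ⟨-, hadj⟩ ξ
    simpa only [hadj ξ, neg_zero] using hderiv ξ

/-- equivalence of stationary points of the discrete minimal
residual functional Φ with solutions of the mixed system. -/
theorem dpg_stationary_iff_mixed
    (X Y : Type*) [NormedAddCommGroup X] [NormedSpace ℝ X]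
    [FiniteDimensional ℝ X]
    [NormedAddCommGroup Y] [InnerProductSpace ℝ Y] [FiniteDimensional ℝ Y]
    (B : X → (Y →L[ℝ] ℝ)) (DB : X → X →L[ℝ] (Y →L[ℝ] ℝ))
    (hB : ∀ ξ, HasFDerivAt B (DB ξ) ξ)
    (F : Y →L[ℝ] ℝ)
    (Φ : X → ℝ) (hΦ : ∀ ξ, Φ ξ = ‖F - B ξ‖ ^ 2 / 2)
    (xh : X) (yh : Y)
    (hyh : ∀ η : Y, ⟪yh, η⟫ = F η - B xh η) :
    (∀ ξ : X, HasDerivAt (fun t : ℝ => Φ (xh + t • ξ)) 0 0) ↔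
      ((∀ η : Y, ⟪yh, η⟫ + B xh η = F η) ∧ ∀ ξ : X, DB xh ξ yh = 0) :=
  dpg_stationary_iff_mixed_general X Y B DB hB F Φ hΦ xh yh hyh
end

section
/- With Φ(ξ) := ½‖F − b(ξ;·)‖²_{Y_h*} twice differentiable at a stationary point x_h with Riesz representation y_h of the residual, the second directional derivative of Φ at x_h in direction ξ_h equals ‖b'(x_h; ξ_h, ·)‖²_{Y_h*} − b''(x_h; ξ_h, ξ_h, y_h). Consequently, if x_h is a local minimizer then b''(x_h; ξ_h, ξ_h, y_h) ≤ ‖b'(x_h; ξ_h, ·)‖²_{Y_h*} for all ξ_h, and if the strict inequality holds for all ξ_h ≠ 0 then x_h is a locally unique minimizer. -/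
/-!
Through the Riesz map, `Φ = ‖r‖² / 2` with `r ξ ∈ Y` the representative of `F - B ξ`, so
`Φ''(x_h)(ξ, ξ) = ‖r' ξ‖² + ⟪r, r''(ξ, ξ)⟫ = ‖b'(x_h; ξ, ·)‖² - b''(x_h; ξ, ξ, y_h)`.
Along the line `t ↦ x_h + t ξ` this is the second derivative, and the one-dimensional
second-derivative test gives the necessary condition. For the sufficient one, positivity of
`Φ''(x_h)` on the compact unit sphere makes it coercive, and integrating the first-order
expansion of `Φ'` at the stationary point along segments gives quadratic growth of `Φ`.
-/

open Filter Topology Set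
open scoped RealInnerProductSpace

theorem IsLocalMin.deriv_deriv_nonneg {g : ℝ → ℝ} {t₀ : ℝ} (hmin : IsLocalMin g t₀)
    (hc : ContinuousAt g t₀) : 0 ≤ deriv (deriv g) t₀ := by
  -- otherwise `t₀` is also a local maximum, so `g` is locally constant
  by_contra! hneg
  have hmax : IsLocalMax g t₀ := isLocalMax_of_deriv_deriv_neg hneg hmin.deriv_eq_zero hc
  have hconst : g =ᶠ[𝓝 t₀] fun _ => g t₀ :=
    (hmin.and hmax).mono fun _ h => le_antisymm h.2 h.1
  have := hconst.deriv.deriv_eq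
  simp only [deriv_const', deriv_const] at this
  exact hneg.ne this

section SecondOrder

variable {E : Type*} [NormedAddCommGroup E] [NormedSpace ℝ E]
  {f : E → ℝ} {f' : E → E →L[ℝ] ℝ} {f'' : E →L[ℝ] E →L[ℝ] ℝ} {a : E}

theorem hasDerivAt_add_smul (a v : E) (t : ℝ) : HasDerivAt (fun s : ℝ => a + s • v) v t := by
  simpa using ((hasDerivAt_id t).smul_const v).const_add a

theorem hasDerivAt_comp_add_smul (hf : ∀ x, HasFDerivAt f (f' x) x) (v : E) (t : ℝ) :
    HasDerivAt (fun s : ℝ => f (a + s • v)) (f' (a + t • v) v) t :=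
  (hf _).comp_hasDerivAt t (hasDerivAt_add_smul a v t)

theorem deriv_deriv_comp_add_smul (hf : ∀ x, HasFDerivAt f (f' x) x)
    (hf' : HasFDerivAt f' f'' a) (v : E) :
    deriv (deriv fun t : ℝ => f (a + t • v)) 0 = f'' v v := by
  have hderiv : deriv (fun t : ℝ => f (a + t • v)) = fun t => f' (a + t • v) v :=
    funext fun t => (hasDerivAt_comp_add_smul hf v t).deriv
  have hf'_line : HasDerivAt (fun t : ℝ => f' (a + t • v)) (f'' v) 0 := by
    have hf'0 : HasFDerivAt f' f'' (a + (0 : ℝ) • v) := by simpa using hf'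
    exact hf'0.comp_hasDerivAt 0 (hasDerivAt_add_smul a v 0)
  rw [hderiv]
  exact (hf'_line.clm_apply (hasDerivAt_const 0 v)).deriv.trans (by simp)

theorem eq_zero_of_forall_hasDerivAt_comp_add_smul (hf : ∀ x, HasFDerivAt f (f' x) x)
    (hstat : ∀ v : E, HasDerivAt (fun t : ℝ => f (a + t • v)) 0 0) : f' a = 0 := by
  ext v
  simpa using (hasDerivAt_comp_add_smul hf v 0).unique (hstat v)

theorem IsLocalMin.apply_self_nonneg_of_hasFDerivAt (hmin : IsLocalMin f a)
    (hf : ∀ x, HasFDerivAt f (f' x) x) (hf' : HasFDerivAt f' f'' a) (v : E) :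
    0 ≤ f'' v v := by
  have hline : Continuous fun t : ℝ => a + t • v := by fun_prop
  have hmin_line : IsLocalMin (fun t : ℝ => f (a + t • v)) 0 :=
    IsLocalMin.comp_continuous (g := fun t : ℝ => a + t • v) (by simpa using hmin)
      hline.continuousAt
  rw [← deriv_deriv_comp_add_smul hf hf' v]
  exact hmin_line.deriv_deriv_nonneg ((hf _).continuousAt.comp hline.continuousAt)

theorem isCoercive_of_forall_ne_zero_pos [FiniteDimensional ℝ E] {Q : E →L[ℝ] E →L[ℝ] ℝ}
    (hQ : ∀ v, v ≠ 0 → 0 < Q v v) : IsCoercive Q := by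
  rcases subsingleton_or_nontrivial E with hE | hE
  · exact ⟨1, one_pos, fun u => by simp [Subsingleton.elim u 0]⟩
  have hcont : Continuous fun v => Q v v := Q.continuous.clm_apply continuous_id
  obtain ⟨u, hu, hmin⟩ := (isCompact_sphere (0 : E) 1).exists_isMinOn
    (NormedSpace.sphere_nonempty.2 zero_le_one) hcont.continuousOn
  have hu1 : ‖u‖ = 1 := mem_sphere_zero_iff_norm.1 hu
  refine ⟨Q u u, hQ u (norm_ne_zero_iff.1 (by simp [hu1])), fun v => ?_⟩
  rcases eq_or_ne v 0 with rfl | hv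
  · simp
  have hnv : 0 < ‖v‖ := norm_pos_iff.2 hv
  have hw : ‖v‖⁻¹ • v ∈ Metric.sphere (0 : E) 1 := by
    simp [norm_smul, hnv.ne']
  have hscale : Q v v = ‖v‖ * ‖v‖ * Q (‖v‖⁻¹ • v) (‖v‖⁻¹ • v) := by
    simp only [map_smul, FunLike.coe_smul, Pi.smul_apply, smul_eq_mul]
    field_simp
  calc Q u u * ‖v‖ * ‖v‖ = ‖v‖ * ‖v‖ * Q u u := by ring
    _ ≤ Q v v := by
      rw [hscale]
      exact mul_le_mul_of_nonneg_left (show Q u u ≤ _ from hmin hw) (by positivity)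

theorem eventually_add_mul_norm_sq_le (hf : ∀ x, HasFDerivAt f (f' x) x)
    (hf' : HasFDerivAt f' f'' a) (h0 : f' a = 0) {C : ℝ} (hC : 0 < C)
    (hcoer : ∀ v, C * ‖v‖ * ‖v‖ ≤ f'' v v) :
    ∀ᶠ x in 𝓝 a, f a + C / 4 * ‖x - a‖ ^ 2 ≤ f x := by
  obtain ⟨r, hr, hball⟩ := Metric.eventually_nhds_iff_ball.1 (hf'.isLittleO.def (half_pos hC))
  filter_upwards [Metric.ball_mem_nhds a hr] with x hx
  set v := x - a
  have hv : ‖v‖ < r := by simpa [v, dist_eq_norm] using hx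
  have hderiv_ge : ∀ t ∈ Icc (0 : ℝ) 1, C / 2 * t * ‖v‖ ^ 2 ≤ f' (a + t • v) v := by
    rintro t ⟨ht0, ht1⟩
    have hnear : a + t • v ∈ Metric.ball a r := by
      rw [Metric.mem_ball, dist_eq_norm, add_sub_cancel_left, norm_smul, Real.norm_of_nonneg ht0]
      exact lt_of_le_of_lt (mul_le_of_le_one_left (norm_nonneg v) ht1) hv
    have hrem := hball _ hnear
    rw [add_sub_cancel_left, h0, sub_zero, norm_smul, Real.norm_of_nonneg ht0] at hrem
    have hrem_v : |f' (a + t • v) v - t * f'' v v| ≤ C / 2 * (t * ‖v‖) * ‖v‖ := by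
      have := (f' (a + t • v) - f'' (t • v)).le_of_opNorm_le hrem v
      simpa [Real.norm_eq_abs] using this
    have := hcoer v
    nlinarith [(abs_le.1 hrem_v).1]
  have hmono : MonotoneOn (fun t : ℝ => f (a + t • v) - C / 4 * t ^ 2 * ‖v‖ ^ 2) (Icc 0 1) := by
    have hk : ∀ t, HasDerivAt (fun t : ℝ => f (a + t • v) - C / 4 * t ^ 2 * ‖v‖ ^ 2)
        (f' (a + t • v) v - C / 2 * t * ‖v‖ ^ 2) t := by
      intro t
      exact ((hasDerivAt_comp_add_smul hf v t).sub
        (((hasDerivAt_pow 2 t).const_mul (C / 4)).mul_const (‖v‖ ^ 2))).congr_deriv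
        (by push_cast; ring)
    refine monotoneOn_of_hasDerivWithinAt_nonneg (convex_Icc 0 1)
      (fun t _ => (hk t).continuousAt.continuousWithinAt) (fun t _ => (hk t).hasDerivWithinAt)
      fun t ht => sub_nonneg.2 (hderiv_ge t (interior_subset ht))
  have := hmono (left_mem_Icc.2 zero_le_one) (right_mem_Icc.2 zero_le_one) zero_le_one
  simp only [zero_smul, add_zero, one_smul, v, add_sub_cancel] at this
  linarith

theorem eventually_lt_of_isCoercive (hf : ∀ x, HasFDerivAt f (f' x) x)
    (hf' : HasFDerivAt f' f'' a) (h0 : f' a = 0) (hcoer : IsCoercive f'') :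
    ∀ᶠ x in 𝓝 a, x ≠ a → f a < f x := by
  obtain ⟨C, hC, hCf''⟩ := hcoer
  filter_upwards [eventually_add_mul_norm_sq_le hf hf' h0 hC hCf''] with x hx hxa
  have : 0 < C / 4 * ‖x - a‖ ^ 2 := by
    have := norm_pos_iff.2 (sub_ne_zero.2 hxa)
    positivity
  linarith

end SecondOrder

section HalfNormSq

variable {E G : Type*} [NormedAddCommGroup E] [NormedSpace ℝ E]
  [NormedAddCommGroup G] [InnerProductSpace ℝ G] {r : E → G} {L : E → E →L[ℝ] G} {x : E}

theorem HasFDerivAt.half_norm_sq (hr : HasFDerivAt r (L x) x) :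
    HasFDerivAt (fun y => ‖r y‖ ^ 2 / 2) ((innerSL ℝ (r x)).comp (L x)) x := by
  have h := (hr.norm_sq.const_mul (2⁻¹ : ℝ)).congr_fderiv
    (g' := (innerSL ℝ (r x)).comp (L x)) (by ext v; simp)
  simpa [div_eq_inv_mul] using h

theorem HasFDerivAt.innerSL_comp {L' : E →L[ℝ] E →L[ℝ] G} (hr : HasFDerivAt r (L x) x)
    (hL : HasFDerivAt L L' x) :
    ∃ H : E →L[ℝ] E →L[ℝ] ℝ, HasFDerivAt (fun y => (innerSL ℝ (r y)).comp (L y)) H x ∧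
      ∀ v w, H v w = ⟪L x v, L x w⟫ + ⟪r x, L' v w⟫ :=
  ⟨_, ((innerSL ℝ).hasFDerivAt.comp x hr).clm_comp hL, fun _ _ => add_comm _ _⟩

end HalfNormSq

theorem exists_hasFDerivAt_half_norm_sq_sub {X Y : Type*} [NormedAddCommGroup X]
    [NormedSpace ℝ X] [NormedAddCommGroup Y] [InnerProductSpace ℝ Y] [CompleteSpace Y]
    {B : X → Y →L[ℝ] ℝ} {DB : X → X →L[ℝ] Y →L[ℝ] ℝ} {D2B : X →L[ℝ] X →L[ℝ] Y →L[ℝ] ℝ}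
    {a : X} (hB : ∀ ξ, HasFDerivAt B (DB ξ) ξ) (hDB : HasFDerivAt DB D2B a)
    (F : Y →L[ℝ] ℝ) {y : Y} (hy : ∀ η : Y, ⟪y, η⟫ = F η - B a η) :
    ∃ (Φ' : X → X →L[ℝ] ℝ) (H : X →L[ℝ] X →L[ℝ] ℝ),
      (∀ ξ, HasFDerivAt (fun ξ => ‖F - B ξ‖ ^ 2 / 2) (Φ' ξ) ξ) ∧ HasFDerivAt Φ' H a ∧
      ∀ ξ, H ξ ξ = ‖DB a ξ‖ ^ 2 - D2B ξ ξ y := by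
  set R' : (Y →L[ℝ] ℝ) ≃ₗᵢ[ℝ] Y := (InnerProductSpace.toDual ℝ Y).symm
  set R : (Y →L[ℝ] ℝ) →L[ℝ] Y := R'.toContinuousLinearEquiv.toContinuousLinearMap
  have hR_inner (g : Y →L[ℝ] ℝ) (η : Y) : ⟪R g, η⟫ = g η := InnerProductSpace.toDual_symm_apply
  have hR_norm (g : Y →L[ℝ] ℝ) : ‖R g‖ = ‖g‖ := LinearIsometryEquiv.norm_map _ g
  have hRy : R (F - B a) = y := by
    refine ext_inner_right ℝ fun η => ?_
    rw [hR_inner, hy]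
    rfl
  have hr (ξ : X) : HasFDerivAt (fun ξ => R (F - B ξ)) (-(R.comp (DB ξ))) ξ :=
    (R.hasFDerivAt.comp ξ ((hasFDerivAt_const F ξ).sub (hB ξ))).congr_fderiv (by simp)
  have hL : HasFDerivAt (fun ξ => -(R.comp (DB ξ)))
      (-((ContinuousLinearMap.compL ℝ X _ Y R).comp D2B)) a :=
    ((ContinuousLinearMap.compL ℝ X _ Y R).hasFDerivAt.comp (f := DB) a hDB).neg
  obtain ⟨H, hH, hH_apply⟩ := (hr a).innerSL_comp hL
  refine ⟨_, H, fun ξ => ?_, hH, fun ξ => ?_⟩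
  · simpa only [hR_norm] using (hr ξ).half_norm_sq (L := fun ξ => -(R.comp (DB ξ)))
  · simp only [hH_apply, hRy, neg_apply, ContinuousLinearMap.comp_apply,
      ContinuousLinearMap.compL_apply]
    rw [inner_neg_neg, real_inner_self_eq_norm_sq, hR_norm, inner_neg_right, real_inner_comm,
      hR_inner]
    ring

/-- second directional derivative of Φ at a stationary point and
the necessary/sufficient second-order conditions. -/
theorem dpg_second_order_conditions
    (X Y : Type*) [NormedAddCommGroup X] [NormedSpace ℝ X]
    [FiniteDimensional ℝ X]
    [NormedAddCommGroup Y] [InnerProductSpace ℝ Y] [FiniteDimensional ℝ Y]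
    (B : X → (Y →L[ℝ] ℝ))
    (DB : X → X →L[ℝ] (Y →L[ℝ] ℝ))
    (D2B : X → X →L[ℝ] X →L[ℝ] (Y →L[ℝ] ℝ))
    (hB : ∀ ξ, HasFDerivAt B (DB ξ) ξ)
    (hDB : ∀ ξ, HasFDerivAt DB (D2B ξ) ξ)
    (F : Y →L[ℝ] ℝ)
    (Φ : X → ℝ) (hΦ : ∀ ξ, Φ ξ = ‖F - B ξ‖ ^ 2 / 2)
    (xh : X) (yh : Y)
    (hyh : ∀ η : Y, ⟪yh, η⟫ = F η - B xh η)
    (hstat : ∀ ξ : X, HasDerivAt (fun t : ℝ => Φ (xh + t • ξ)) 0 0) :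
    (∀ ξ : X, deriv (deriv (fun t : ℝ => Φ (xh + t • ξ))) 0
        = ‖DB xh ξ‖ ^ 2 - D2B xh ξ ξ yh) ∧
    (IsLocalMin Φ xh → ∀ ξ : X, D2B xh ξ ξ yh ≤ ‖DB xh ξ‖ ^ 2) ∧
    ((∀ ξ : X, ξ ≠ 0 → D2B xh ξ ξ yh < ‖DB xh ξ‖ ^ 2) →
      ∃ U ∈ nhds xh, ∀ z ∈ U, z ≠ xh → Φ xh < Φ z) := by
  obtain rfl : Φ = fun ξ => ‖F - B ξ‖ ^ 2 / 2 := funext hΦ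
  obtain ⟨Φ', H, hΦ', hH, hH_apply⟩ := exists_hasFDerivAt_half_norm_sq_sub hB (hDB xh) F hyh
  refine ⟨fun ξ => by rw [deriv_deriv_comp_add_smul hΦ' hH, hH_apply], fun hmin ξ => ?_,
    fun hpos => ?_⟩
  · have := hmin.apply_self_nonneg_of_hasFDerivAt hΦ' hH ξ
    rw [hH_apply] at this
    linarith
  · have h0 : Φ' xh = 0 := eq_zero_of_forall_hasDerivAt_comp_add_smul hΦ' hstat
    have hcoer : IsCoercive H := isCoercive_of_forall_ne_zero_pos fun ξ hξ => by
      rw [hH_apply]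
      linarith [hpos ξ hξ]
    exact ⟨_, eventually_lt_of_isCoercive hΦ' hH h0 hcoer, fun z hz hne => hz hne⟩
end
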